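/- A nontrivial free group F on at least two generators is not inner amenable: there is no conjugation-invariant finitely additive probability measure on F \ {1}. -/

import Mathlib

/-!
For a letter `z` of a free group, let `T_z` (`FreeGroup.noCancelConj z`) be the set of `g` such
that the word `z g z⁻¹` is reduced as written. Conjugation by `z` maps `T_z` into itself, so by
conjugation invariance the complement of `z T_z z⁻¹` in `T_z` has mean zero; it contains every
`g ∈ T_z` whose last letter is not `z⁻¹`. With two generators `a ≠ b`, every `g ≠ 1` lies in such
a null set: take `z` on a generator other than that of the last letter of `g`, with the sign of
the first letter of `g`. Finitely many null sets cannot cover a set of mean one.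
-/

open Filter Topology

/-- A finitely additive conjugation-invariant probability measure (mean)
on `G \ {1}`. -/
structure ConjInvMean (G : Type*) [Group G] where
  μ : Set G → ℝ
  nonneg : ∀ A : Set G, A ⊆ {g : G | g ≠ 1} → 0 ≤ μ A
  total : μ {g : G | g ≠ 1} = 1
  additive : ∀ A B : Set G, A ⊆ {g : G | g ≠ 1} → B ⊆ {g : G | g ≠ 1} →
    Disjoint A B → μ (A ∪ B) = μ A + μ B
  conj_inv : ∀ (g : G) (A : Set G), A ⊆ {h : G | h ≠ 1} →
    μ ((fun x => g * x * g⁻¹) '' A) = μ A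

/-- The set `N = {g : μ(C_G(g) \ {1}) = 1} ∪ {1}`. -/
def Nset {G : Type*} [Group G] (m : ConjInvMean G) : Set G :=
  {g : G | m.μ ((Subgroup.centralizer {g} : Set G) \ {1}) = 1} ∪ {1}

namespace ConjInvMean

variable {G : Type*} [Group G] (m : ConjInvMean G)

theorem μ_empty : m.μ ∅ = 0 := by
  have := m.additive ∅ ∅ (Set.empty_subset _) (Set.empty_subset _) (Set.disjoint_empty _)
  rw [Set.union_empty] at this
  linarith

theorem μ_mono {A B : Set G} (hAB : A ⊆ B) (hB : B ⊆ {g | g ≠ 1}) : m.μ A ≤ m.μ B := by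
  have hsplit := m.additive A (B \ A) (hAB.trans hB) (Set.sdiff_subset.trans hB)
    Set.disjoint_sdiff_right
  rw [Set.union_sdiff_cancel hAB] at hsplit
  linarith [m.nonneg (B \ A) (Set.sdiff_subset.trans hB)]

theorem μ_union_le {A B : Set G} (hA : A ⊆ {g | g ≠ 1}) (hB : B ⊆ {g | g ≠ 1}) :
    m.μ (A ∪ B) ≤ m.μ A + m.μ B := by
  rw [← Set.union_sdiff_self, m.additive A (B \ A) hA (Set.sdiff_subset.trans hB)
    Set.disjoint_sdiff_right]
  linarith [m.μ_mono (Set.sdiff_subset (s := B) (t := A)) hB]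

theorem μ_iUnion_le {ι : Type*} [Fintype ι] {A : ι → Set G} (hA : ∀ i, A i ⊆ {g | g ≠ 1}) :
    m.μ (⋃ i, A i) ≤ ∑ i, m.μ (A i) := by
  classical
  suffices ∀ s : Finset ι, m.μ (⋃ i ∈ s, A i) ≤ ∑ i ∈ s, m.μ (A i) by
    simpa using this Finset.univ
  intro s
  induction s using Finset.induction_on with
  | empty => simp [m.μ_empty]
  | insert i s hi ih =>
    rw [Finset.set_biUnion_insert, Finset.sum_insert hi]
    have := m.μ_union_le (hA i) (Set.iUnion₂_subset fun j (_ : j ∈ s) => hA j)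
    linarith

theorem μ_sdiff_conj_image_eq_zero {T : Set G} (hT : T ⊆ {g | g ≠ 1}) {g : G}
    (hgT : (g * · * g⁻¹) '' T ⊆ T) : m.μ (T \ (g * · * g⁻¹) '' T) = 0 := by
  have hsplit := m.additive _ _ (hgT.trans hT) (Set.sdiff_subset.trans hT)
    Set.disjoint_sdiff_right
  rw [Set.union_sdiff_cancel hgT, m.conj_inv g T hT] at hsplit
  linarith

theorem isEmpty_of_subset_iUnion {ι : Type*} [Fintype ι] (g : ι → G) (T : ι → Set G)
    (hT : ∀ i, T i ⊆ {x | x ≠ 1}) (hconj : ∀ i, (g i * · * (g i)⁻¹) '' T i ⊆ T i)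
    (hcover : {x : G | x ≠ 1} ⊆ ⋃ i, T i \ (g i * · * (g i)⁻¹) '' T i) :
    IsEmpty (ConjInvMean G) := by
  refine ⟨fun m => ?_⟩
  have hA : ∀ i, T i \ (g i * · * (g i)⁻¹) '' T i ⊆ {x | x ≠ 1} :=
    fun i => Set.sdiff_subset.trans (hT i)
  have := (m.μ_mono hcover (Set.iUnion_subset hA)).trans (m.μ_iUnion_le hA)
  simp only [m.total, m.μ_sdiff_conj_image_eq_zero (hT _) (hconj _), Finset.sum_const_zero]
    at this
  linarith

end ConjInvMean

namespace FreeGroup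

variable {α : Type*} [DecidableEq α]

def noCancelConj (z : α × Bool) : Set (FreeGroup α) :=
  {g | IsReduced ([z] ++ g.toWord ++ invRev [z])}

theorem ne_one_of_mem_noCancelConj {z : α × Bool} {g : FreeGroup α}
    (hg : g ∈ noCancelConj z) : g ≠ 1 := by
  rintro rfl
  simp [noCancelConj, invRev] at hg

theorem toWord_conj_of_mem_noCancelConj {z : α × Bool} {g : FreeGroup α}
    (hg : g ∈ noCancelConj z) :
    (mk [z] * g * (mk [z])⁻¹).toWord = [z] ++ g.toWord ++ invRev [z] := by
  rw [inv_mk, ← mk_toWord (x := g), mul_mk, mul_mk, toWord_mk, toWord_mk, reduce_toWord,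
    hg.reduce_eq]

theorem conj_image_noCancelConj_subset (z : α × Bool) :
    (mk [z] * · * (mk [z])⁻¹) '' noCancelConj z ⊆ noCancelConj z := by
  rintro _ ⟨g, hg, rfl⟩
  show IsReduced ([z] ++ (mk [z] * g * (mk [z])⁻¹).toWord ++ invRev [z])
  rw [toWord_conj_of_mem_noCancelConj hg]
  replace hg : IsReduced ([z] ++ g.toWord ++ invRev [z]) := hg
  -- the only new adjacent pairs are `z z` and `z⁻¹ z⁻¹`, which do not cancel
  have hleft : IsReduced ([z] ++ ([z] ++ g.toWord ++ invRev [z])) := by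
    have hzz : IsReduced ([z] ++ [z]) := by simp
    simpa only [List.append_assoc] using
      hzz.append_overlap (by simpa only [List.append_assoc] using hg) (List.cons_ne_nil z [])
  have hright : IsReduced ([z] ++ g.toWord ++ invRev [z] ++ invRev [z]) :=
    hg.append_overlap (by simp [invRev]) (by simp [invRev])
  exact hleft.append_overlap hright (by simp)

theorem mem_noCancelConj_sdiff_conj_image {z x y : α × Bool} {g : FreeGroup α}
    (hx : g.toWord.head? = some x) (hy : g.toWord.getLast? = some y)
    (hxz : z.1 = x.1 → z.2 = x.2) (hyz : y.1 ≠ z.1) :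
    g ∈ noCancelConj z \ (mk [z] * · * (mk [z])⁻¹) '' noCancelConj z := by
  constructor
  · refine (IsReduced.singleton.append isReduced_toWord ?_).append (by simp [invRev]) ?_
    · simpa [hx] using hxz
    · have : y.1 = z.1 → y.2 = !z.2 := fun h => absurd h hyz
      simpa [List.getLast?_cons, hy, invRev] using this
  · rintro ⟨h, hh, rfl⟩
    rw [toWord_conj_of_mem_noCancelConj hh] at hy
    simp [List.getLast?_cons, invRev] at hy
    exact hyz (by rw [← hy])

theorem exists_mem_noCancelConj_sdiff_conj_image {a b : α} (hab : a ≠ b) {g : FreeGroup α}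
    (hg : g ≠ 1) : ∃ c ∈ ({a, b} : Finset α), ∃ s : Bool,
      g ∈ noCancelConj (c, s) \ (mk [(c, s)] * · * (mk [(c, s)])⁻¹) '' noCancelConj (c, s) := by
  have hne : g.toWord ≠ [] := by simpa [toWord_eq_nil_iff] using hg
  obtain ⟨c, hc, hyc⟩ : ∃ c ∈ ({a, b} : Finset α), (g.toWord.getLast hne).1 ≠ c := by
    by_cases hya : (g.toWord.getLast hne).1 = a
    · exact ⟨b, by simp, hya ▸ hab⟩
    · exact ⟨a, by simp, hya⟩
  exact ⟨c, hc, (g.toWord.head hne).2, mem_noCancelConj_sdiff_conj_image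
    (List.head?_eq_some_head hne) (List.getLast?_eq_some_getLast hne) (fun _ => rfl) hyc⟩

end FreeGroup

/-- A free group on at least two generators is not inner amenable. -/
theorem stmt_9 {α : Type*} (a b : α) (hab : a ≠ b) :
    IsEmpty (ConjInvMean (FreeGroup α)) := by
  classical
  let z : ({a, b} : Finset α) × Bool → α × Bool := fun p => (p.1, p.2)
  refine ConjInvMean.isEmpty_of_subset_iUnion (fun p => FreeGroup.mk [z p])
    (fun p => FreeGroup.noCancelConj (z p)) (fun _ _ => FreeGroup.ne_one_of_mem_noCancelConj)
    (fun p => FreeGroup.conj_image_noCancelConj_subset (z p)) fun g hg => ?_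
  obtain ⟨c, hc, s, hcs⟩ := FreeGroup.exists_mem_noCancelConj_sdiff_conj_image hab hg
  exact Set.mem_iUnion.2 ⟨(⟨c, hc⟩, s), hcs⟩
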